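/- arXiv:1807.06408 — 7 statements merged into one kernel-verified Lean document; each statement's English description precedes it below -/
import Mathlib

section
/- Let T and S be trivial left braces (i.e., abelian groups with a+b = a·b), let b : T × T → S be a symmetric Z-bilinear map, and let α : S → Aut(T,+) be a group homomorphism such that α_s preserves b (i.e., b(α_s(t1),α_s(t2)) = b(t1,t2)) for all s ∈ S. Then T × S with operations (t1,s1)+(t2,s2) = (t1+t2, s1+s2+b(t1,t2)) and (t1,s1)·(t2,s2) = (t1+α_{s1}(t2), s1+s2) is a left brace. -/
/-!
The additive group is the extension of `T` by `S` along the symmetric biadditive cocycle `b`,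
and the multiplicative group is the semidirect product `T ⋊_α S`. Expanding both sides of the
brace identity bilinearly, the terms `b (α s u) (α s v)` and `b u v` match because `α s`
preserves `b`, and the cross terms match by symmetry of `b`.
-/

namespace AsymmetricProduct

variable {T S : Type*} [AddCommGroup T] [AddCommGroup S]

section Add

variable (B : T →+ T →+ S)

def asymAdd (x y : T × S) : T × S := (x.1 + y.1, x.2 + y.2 + B x.1 y.1)

def asymNeg (x : T × S) : T × S := (-x.1, -x.2 + B x.1 x.1)

theorem asymAdd_assoc (x y z : T × S) :
    asymAdd B (asymAdd B x y) z = asymAdd B x (asymAdd B y z) := by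
  simp only [asymAdd, Prod.mk.injEq, map_add, AddMonoidHom.add_apply]
  constructor <;> abel

theorem asymAdd_comm (hB : ∀ u v, B u v = B v u) (x y : T × S) :
    asymAdd B x y = asymAdd B y x := by
  simp only [asymAdd, Prod.mk.injEq, hB x.1]
  constructor <;> abel

theorem zero_asymAdd (x : T × S) : asymAdd B (0, 0) x = x := by
  simp [asymAdd]

theorem asymAdd_asymNeg (x : T × S) : asymAdd B x (asymNeg B x) = (0, 0) := by
  simp [asymAdd, asymNeg]

end Add

section Mul

variable (α : S →+ AddAut T)

def asymMul (x y : T × S) : T × S := (x.1 + α x.2 y.1, x.2 + y.2)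

def asymInv (x : T × S) : T × S := (-α (-x.2) x.1, -x.2)

theorem asymMul_assoc (x y z : T × S) :
    asymMul α (asymMul α x y) z = asymMul α x (asymMul α y z) := by
  simp only [asymMul, Prod.mk.injEq, map_add, AddAut.add_apply]
  constructor <;> abel

theorem zero_asymMul (x : T × S) : asymMul α (0, 0) x = x := by
  simp [asymMul]

theorem asymMul_zero (x : T × S) : asymMul α x (0, 0) = x := by
  simp [asymMul]

theorem asymMul_asymInv (x : T × S) : asymMul α x (asymInv α x) = (0, 0) := by
  simp [asymMul, asymInv]

theorem asymInv_asymMul (x : T × S) : asymMul α (asymInv α x) x = (0, 0) := by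
  simp [asymMul, asymInv]

end Mul

theorem asymMul_asymAdd (B : T →+ T →+ S) (α : S →+ AddAut T) (hB : ∀ u v, B u v = B v u)
    (hαB : ∀ s u v, B (α s u) (α s v) = B u v) (a c d : T × S) :
    asymAdd B (asymMul α a (asymAdd B c d)) a =
      asymAdd B (asymMul α a c) (asymMul α a d) := by
  simp only [asymAdd, asymMul, Prod.mk.injEq, map_add, AddMonoidHom.add_apply, hαB]
  rw [hB a.1 (α a.2 d.1)]
  constructor <;> abel

end AsymmetricProduct

open AsymmetricProduct in
/-- The asymmetric product of two trivial left braces (abelian groups `T`, `S`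
with `a + b = a · b`) via a symmetric bilinear map `b : T × T → S` and a group
homomorphism `α : S → Aut(T,+)` preserving `b` is a left brace: `T × S` with
`(t1,s1)+(t2,s2) = (t1+t2, s1+s2+b t1 t2)` and
`(t1,s1)·(t2,s2) = (t1 + α s1 t2, s1+s2)` satisfies all left brace axioms. -/
theorem stmt3 {T S : Type*} [AddCommGroup T] [AddCommGroup S]
    (b : T → T → S)
    (hbl : ∀ u v w : T, b (u + v) w = b u w + b v w)
    (hbr : ∀ u v w : T, b u (v + w) = b u v + b u w)
    (hbs : ∀ u v : T, b u v = b v u)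
    (α : S → T ≃+ T)
    (hα : ∀ s s' : S, α (s + s') = α s + α s')
    (hαb : ∀ (s : S) (u v : T), b (α s u) (α s v) = b u v) :
    let add : T × S → T × S → T × S := fun x y => (x.1 + y.1, x.2 + y.2 + b x.1 y.1)
    let mul : T × S → T × S → T × S := fun x y => (x.1 + α x.2 y.1, x.2 + y.2)
    (∀ x y z : T × S, add (add x y) z = add x (add y z)) ∧
    (∀ x y : T × S, add x y = add y x) ∧
    (∀ x : T × S, add (0, 0) x = x) ∧
    (∀ x : T × S, ∃ y : T × S, add x y = (0, 0)) ∧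
    (∀ x y z : T × S, mul (mul x y) z = mul x (mul y z)) ∧
    (∀ x : T × S, mul (0, 0) x = x) ∧
    (∀ x : T × S, mul x (0, 0) = x) ∧
    (∀ x : T × S, ∃ y : T × S, mul x y = (0, 0) ∧ mul y x = (0, 0)) ∧
    (∀ a c d : T × S, add (mul a (add c d)) a = add (mul a c) (mul a d)) := by
  let B : T →+ T →+ S :=
    AddMonoidHom.mk' (fun u => AddMonoidHom.mk' (b u) (hbr u))
      (fun u v => AddMonoidHom.ext (hbl u v))
  let αHom : S →+ AddAut T := AddMonoidHom.mk' α hα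
  exact ⟨asymAdd_assoc B, asymAdd_comm B hbs, zero_asymAdd B,
    fun x => ⟨_, asymAdd_asymNeg B x⟩, asymMul_assoc αHom, zero_asymMul αHom, asymMul_zero αHom,
    fun x => ⟨_, asymMul_asymInv αHom x, asymInv_asymMul αHom x⟩,
    asymMul_asymAdd B αHom hbs hαb⟩
end

section
/- Let p and q be distinct primes and let C be the companion matrix of the polynomial x^{q-1} + x^{q-2} + ⋯ + x + 1 over Z/(p). Then the block matrix f = diag(C, (C^{-1})^T) of size 2(q−1) satisfies f^T · J · f = J, where J is the block matrix with zero diagonal blocks and identity off-diagonal blocks of size q−1; moreover f has multiplicative order q and f − I is invertible. -/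
open Matrix

/-- The companion matrix over `ZMod p` of the polynomial
`x^(q-1) + x^(q-2) + ⋯ + x + 1`: subdiagonal of 1's and last column of -1's. -/
def Cmat (p q : ℕ) : Matrix (Fin (q - 1)) (Fin (q - 1)) (ZMod p) :=
  fun i j => if (j : ℕ) = q - 2 then -1 else if (i : ℕ) = (j : ℕ) + 1 then 1 else 0

/-- The block matrix `diag(C, (C⁻¹)ᵀ)` of size `2(q-1)`. -/
noncomputable def fmat (p q : ℕ) :
    Matrix (Fin (q - 1) ⊕ Fin (q - 1)) (Fin (q - 1) ⊕ Fin (q - 1)) (ZMod p) :=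
  Matrix.fromBlocks (Cmat p q) 0 0 ((Cmat p q)⁻¹)ᵀ

/-- The hyperbolic form matrix `J` with zero diagonal blocks and identity
off-diagonal blocks of size `q-1`. -/
def Jmat (p q : ℕ) :
    Matrix (Fin (q - 1) ⊕ Fin (q - 1)) (Fin (q - 1) ⊕ Fin (q - 1)) (ZMod p) :=
  Matrix.fromBlocks 0 1 1 0


/-!
Let `eₖ` be the standard basis. The companion matrix `C` maps `e₀ ↦ e₁ ↦ ⋯ ↦ e_{q-2}` and
`e_{q-2} ↦ -(e₀ + ⋯ + e_{q-2})`, so `S = 1 + C + ⋯ + C^{q-1}` kills the cyclic vector `e₀`;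
since `S` commutes with `C`, `S = 0`, hence `C^q = 1`. Summing
`C^i - 1 = (C - 1)(1 + ⋯ + C^{i-1})` over `i < q` gives `(C - 1) H = -q` with `H` a polynomial
in `C`; as `q` is a unit in `ZMod p`, `C - 1` is invertible, and so is
`(C⁻¹ - 1)ᵀ = -(C⁻¹ (C - 1))ᵀ`. Thus `f - 1 = diag(C - 1, (C⁻¹ - 1)ᵀ)` is invertible, so `f ≠ 1`,
while `f^q = 1` blockwise; as `q` is prime, `f` has order `q`. Finally `fᵀ J f = J` is a block
computation using only `C⁻¹ C = 1`.
-/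

open Finset

theorem isUnit_sub_one_of_geom_sum_eq_zero {A : Type*} [Ring A] {a : A} {n : ℕ}
    (h : ∑ i ∈ range n, a ^ i = 0) (hn : IsUnit (n : A)) : IsUnit (a - 1) := by
  set H := ∑ i ∈ range n, ∑ j ∈ range i, a ^ j
  have hH : (a - 1) * H = -n := by
    rw [mul_sum, sum_congr rfl fun i _ => mul_geom_sum a i, sum_sub_distrib, h, sum_const,
      card_range, nsmul_one, zero_sub]
  have hcomm : Commute (a - 1) H :=
    (Commute.sum_right _ _ _ fun i _ => Commute.sum_right _ _ _ fun j _ =>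
      Commute.self_pow a j).sub_left (Commute.one_left H)
  exact (hcomm.isUnit_mul_iff.mp (hH ▸ hn.neg)).1

namespace Matrix

theorem fromBlocks_diagonal_sub_one {m n R : Type*} [DecidableEq m] [DecidableEq n]
    [AddGroupWithOne R] (A : Matrix m m R) (D : Matrix n n R) :
    fromBlocks A 0 0 D - 1 = fromBlocks (A - 1) 0 0 (D - 1) := by
  rw [← fromBlocks_one, sub_eq_add_neg, fromBlocks_neg, fromBlocks_add]
  simp [sub_eq_add_neg]

variable {n R : Type*} [Fintype n] [DecidableEq n] [CommRing R]

theorem eq_zero_of_mulVec_eq_zero_of_cyclic {A M : Matrix n n R} {v : n → R}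
    (hcyc : ∀ j, ∃ k : ℕ, M ^ k *ᵥ v = Pi.single j 1) (hAM : Commute A M) (hAv : A *ᵥ v = 0) :
    A = 0 := by
  ext i j
  obtain ⟨k, hk⟩ := hcyc j
  have hcol : A *ᵥ Pi.single j 1 = 0 := by
    rw [← hk, mulVec_mulVec, (hAM.pow_right k).eq, ← mulVec_mulVec, hAv, mulVec_zero]
  simpa using congrFun hcol i

theorem isUnit_nonsing_inv_sub_one {A : Matrix n n R} (hA : IsUnit A) (h : IsUnit (A - 1)) :
    IsUnit (A⁻¹ - 1) := by
  have hdet : IsUnit A.det := (isUnit_iff_isUnit_det A).mp hA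
  have : A⁻¹ - 1 = -(A⁻¹ * (A - 1)) := by rw [mul_sub, nonsing_inv_mul A hdet, mul_one, neg_sub]
  rw [this]
  exact ((isUnit_nonsing_inv_iff.mpr hA).mul h).neg

theorem transpose_mul_hyperbolic_mul_fromBlocks_inv_transpose {A : Matrix n n R}
    (hA : IsUnit A.det) :
    (fromBlocks A 0 0 A⁻¹ᵀ)ᵀ * fromBlocks 0 1 1 0 * fromBlocks A 0 0 A⁻¹ᵀ =
      (fromBlocks 0 1 1 0 : Matrix (n ⊕ n) (n ⊕ n) R) := by
  simp [fromBlocks_transpose, fromBlocks_multiply, ← transpose_mul, nonsing_inv_mul A hA]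

end Matrix

section Cmat

variable {p q : ℕ}

theorem Cmat_mulVec_single {j : Fin (q - 1)} (hj : (j : ℕ) + 1 < q - 1) :
    Cmat p q *ᵥ Pi.single j 1 = Pi.single ⟨j + 1, hj⟩ 1 := by
  ext i
  simp [Cmat, Pi.single_apply, Fin.ext_iff, show (j : ℕ) ≠ q - 2 by omega]

theorem Cmat_mulVec_single_last (hq : 2 ≤ q) :
    Cmat p q *ᵥ Pi.single ⟨q - 2, by omega⟩ 1 = -1 := by
  ext i
  simp [Cmat]

theorem Cmat_pow_mulVec_single_zero (hq : 2 ≤ q) (k : Fin (q - 1)) :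
    Cmat p q ^ (k : ℕ) *ᵥ Pi.single ⟨0, by omega⟩ 1 = Pi.single k 1 := by
  obtain ⟨k, hk⟩ := k
  induction k with
  | zero => rw [pow_zero, one_mulVec]
  | succ k ih =>
    rw [pow_succ', ← mulVec_mulVec, ih (by omega), Cmat_mulVec_single]

theorem geom_sum_Cmat_mulVec_single_zero (hq : 2 ≤ q) :
    (∑ k ∈ range q, Cmat p q ^ k) *ᵥ Pi.single ⟨0, by omega⟩ 1 = 0 := by
  have hlast : Cmat p q ^ (q - 1) = Cmat p q * Cmat p q ^ (q - 2) := by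
    rw [← pow_succ']; congr 1; omega
  rw [sum_mulVec, show range q = range (q - 1 + 1) by congr; omega, sum_range_succ,
    ← Fin.sum_univ_eq_sum_range, sum_congr rfl fun k _ => Cmat_pow_mulVec_single_zero hq k,
    univ_sum_single, hlast, ← mulVec_mulVec, Cmat_pow_mulVec_single_zero hq ⟨q - 2, by omega⟩,
    Cmat_mulVec_single_last hq]
  exact add_neg_cancel 1

theorem geom_sum_Cmat (hq : 2 ≤ q) : ∑ k ∈ range q, Cmat p q ^ k = 0 :=
  eq_zero_of_mulVec_eq_zero_of_cyclic (fun j => ⟨j, Cmat_pow_mulVec_single_zero hq j⟩)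
    (Commute.sum_left _ _ _ fun k _ => Commute.pow_self _ k) (geom_sum_Cmat_mulVec_single_zero hq)

theorem Cmat_pow_self (hq : 2 ≤ q) : Cmat p q ^ q = 1 := by
  rw [← sub_eq_zero, ← geom_sum_mul, geom_sum_Cmat hq, zero_mul]

theorem isUnit_det_Cmat (hq : 2 ≤ q) : IsUnit (Cmat p q).det :=
  isUnit_det_of_right_inverse (B := Cmat p q ^ (q - 1)) <| by
    rw [← pow_succ', Nat.sub_add_cancel (by omega), Cmat_pow_self hq]

theorem fmat_pow_self (hq : 2 ≤ q) : fmat p q ^ q = 1 := by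
  rw [fmat, fromBlocks_diagonal_pow, ← transpose_pow, inv_pow', Cmat_pow_self hq, inv_one,
    transpose_one, fromBlocks_one]

theorem isUnit_Cmat_sub_one (hp : p.Prime) (hq : q.Prime) (hpq : p ≠ q) :
    IsUnit (Cmat p q - 1) := by
  have hqp : IsUnit (q : ZMod p) :=
    (ZMod.isUnit_iff_coprime q p).mpr ((Nat.coprime_primes hq hp).mpr hpq.symm)
  refine isUnit_sub_one_of_geom_sum_eq_zero (geom_sum_Cmat hq.two_le) ?_
  simpa using hqp.map (algebraMap (ZMod p) (Matrix (Fin (q - 1)) (Fin (q - 1)) (ZMod p)))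

theorem isUnit_fmat_sub_one (hp : p.Prime) (hq : q.Prime) (hpq : p ≠ q) :
    IsUnit (fmat p q - 1) := by
  have hC := isUnit_Cmat_sub_one hp hq hpq
  have hCinv : IsUnit ((Cmat p q)⁻¹ - 1) := isUnit_nonsing_inv_sub_one
    ((isUnit_iff_isUnit_det _).mpr (isUnit_det_Cmat hq.two_le)) hC
  rw [fmat, fromBlocks_diagonal_sub_one, isUnit_fromBlocks_zero₂₁,
    show (Cmat p q)⁻¹ᵀ - 1 = ((Cmat p q)⁻¹ - 1)ᵀ by rw [transpose_sub, transpose_one],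
    isUnit_transpose]
  exact ⟨hC, hCinv⟩

theorem orderOf_fmat (hp : p.Prime) (hq : q.Prime) (hpq : p ≠ q) :
    orderOf (fmat p q) = q := by
  have : Fact q.Prime := ⟨hq⟩
  have : Fact p.Prime := ⟨hp⟩
  have : Nonempty (Fin (q - 1)) := ⟨⟨0, by have := hq.two_le; omega⟩⟩
  refine orderOf_eq_prime (fmat_pow_self hq.two_le) fun hf => ?_
  have hunit := isUnit_fmat_sub_one hp hq hpq
  rw [hf, sub_self] at hunit
  exact not_isUnit_zero hunit

end Cmat

/-- For distinct primes `p` and `q`, the block matrix `f = diag(C, (C⁻¹)ᵀ)`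
built from the companion matrix `C` of `x^(q-1)+⋯+x+1` over `ZMod p` satisfies
`fᵀ J f = J`, has multiplicative order `q`, and `f − 1` is invertible. -/
theorem stmt5 (p q : ℕ) (hp : p.Prime) (hq : q.Prime) (hpq : p ≠ q) :
    (fmat p q)ᵀ * Jmat p q * fmat p q = Jmat p q ∧
    orderOf (fmat p q) = q ∧
    IsUnit (fmat p q - 1) :=
  ⟨transpose_mul_hyperbolic_mul_fromBlocks_inv_transpose (isUnit_det_Cmat hq.two_le),
    orderOf_fmat hp hq hpq, isUnit_fmat_sub_one hp hq hpq⟩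
end

section
/- Every finite abelian group is the multiplicative group of some left brace (namely the trivial brace on itself); more generally, if a finite group G is a semidirect product A ⋊ H of an abelian group A acting via automorphisms by an IYB group H realized with a suitable brace structure, then G is an IYB group. -/
/-- A left brace: `(B,+)` abelian group, `(B,·)` group, with
`a * (b + c) + a = a * b + a * c`. -/
class LeftBrace (B : Type*) extends AddCommGroup B, Group B where
  left_compat : ∀ a b c : B, a * (b + c) + a = a * b + a * c

/-- `G` is isomorphic to the multiplicative group of the left brace `B`. -/
def MultGroupIso (G : Type*) (B : Type) [Group G] [LeftBrace B] : Prop :=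
  Nonempty (G ≃* B)

/-- A finite group is IYB if it is isomorphic to the multiplicative group of
some finite left brace. -/
def IsIYB (G : Type*) [Group G] : Prop :=
  ∃ (B : Type) (inst : LeftBrace B) (_ : Finite B), @MultGroupIso G B _ inst

/-! ### Auxiliary constructions -/

/-- Type synonym for the trivial brace on a commutative group. -/
def TrivBrace (A : Type) : Type := A

instance (A : Type) [CommGroup A] : CommGroup (TrivBrace A) :=
  inferInstanceAs (CommGroup A)

/-- The additive equivalence for the trivial brace. -/
def trivEquiv (A : Type) [CommGroup A] : TrivBrace A ≃ Additive A where
  toFun a := Additive.ofMul (a : A)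
  invFun a := (Additive.toMul a : A)
  left_inv _ := rfl
  right_inv _ := rfl

instance trivBraceAdd (A : Type) [CommGroup A] : AddCommGroup (TrivBrace A) :=
  (trivEquiv A).addCommGroup

theorem triv_add (A : Type) [CommGroup A] (a b : TrivBrace A) :
    a + b = (a : A) * b := rfl

instance trivBrace (A : Type) [CommGroup A] : LeftBrace (TrivBrace A) where
  left_compat a b c := by
    simp only [triv_add]
    show (a : A) * (b * c) * a = a * b * (a * c)
    simp [mul_comm, mul_left_comm, mul_assoc]

/-- Type synonym for the semidirect-product brace. -/
def SDBrace (A : Type) [CommGroup A] (B : Type) [LeftBrace B]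
    (φ : B →* MulAut A) : Type := A ⋊[φ] B

instance sdGroup (A : Type) [CommGroup A] (B : Type) [LeftBrace B]
    (φ : B →* MulAut A) : Group (SDBrace A B φ) :=
  inferInstanceAs (Group (A ⋊[φ] B))

/-- The additive equivalence carrier. -/
def sdEquiv (A : Type) [CommGroup A] (B : Type) [LeftBrace B]
    (φ : B →* MulAut A) : SDBrace A B φ ≃ Additive A × B where
  toFun x := (Additive.ofMul (SemidirectProduct.left x), SemidirectProduct.right x)
  invFun p := ⟨Additive.toMul p.1, p.2⟩
  left_inv _ := rfl
  right_inv _ := rfl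

instance sdAdd (A : Type) [CommGroup A] (B : Type) [LeftBrace B]
    (φ : B →* MulAut A) : AddCommGroup (SDBrace A B φ) :=
  (sdEquiv A B φ).addCommGroup

theorem sd_add_left (A : Type) [CommGroup A] (B : Type) [LeftBrace B]
    (φ : B →* MulAut A) (x y : SDBrace A B φ) :
    SemidirectProduct.left (x + y) =
      SemidirectProduct.left x * SemidirectProduct.left y := rfl

theorem sd_add_right (A : Type) [CommGroup A] (B : Type) [LeftBrace B]
    (φ : B →* MulAut A) (x y : SDBrace A B φ) :
    SemidirectProduct.right (x + y) =
      SemidirectProduct.right x + SemidirectProduct.right y := rfl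

instance sdBrace (A : Type) [CommGroup A] (B : Type) [LeftBrace B]
    (φ : B →* MulAut A) : LeftBrace (SDBrace A B φ) where
  left_compat a b c := by
    have hml : ∀ x y : SDBrace A B φ, SemidirectProduct.left (x * y) =
        SemidirectProduct.left x * φ (SemidirectProduct.right x) (SemidirectProduct.left y) :=
      fun _ _ => rfl
    have hmr : ∀ x y : SDBrace A B φ, SemidirectProduct.right (x * y) =
        SemidirectProduct.right x * SemidirectProduct.right y := fun _ _ => rfl
    refine SemidirectProduct.ext ?_ ?_
    · rw [sd_add_left, sd_add_left, hml, hml, hml, sd_add_left, map_mul]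
      simp [mul_comm, mul_left_comm, mul_assoc]
    · rw [sd_add_right, sd_add_right, hmr, hmr, hmr, sd_add_right]
      exact LeftBrace.left_compat _ _ _

instance sdFinite (A : Type) [CommGroup A] [Finite A] (B : Type) [LeftBrace B]
    [Finite B] (φ : B →* MulAut A) : Finite (SDBrace A B φ) :=
  Finite.of_equiv _ (sdEquiv A B φ).symm

/-- Every finite abelian group is an IYB group (via the trivial brace); and if
a finite group is a semidirect product `A ⋊ B` of a finite abelian group `A`
by (the multiplicative group of) a finite left brace `B` acting via
automorphisms, then it is an IYB group. -/
theorem stmt12 :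
    (∀ (A : Type) [CommGroup A] [Finite A], IsIYB A) ∧
    (∀ (A : Type) [CommGroup A] [Finite A] (B : Type) [LeftBrace B] [Finite B]
      (φ : B →* MulAut A), IsIYB (A ⋊[φ] B)) := by
  constructor
  · intro A _ _
    exact ⟨TrivBrace A, inferInstance, inferInstanceAs (Finite A),
      ⟨MulEquiv.refl A⟩⟩
  · intro A _ _ B _ _ φ
    exact ⟨SDBrace A B φ, inferInstance, inferInstance,
      ⟨⟨Equiv.refl _, fun _ _ => rfl⟩⟩⟩
end

section
/- Let B be a left brace and define B0 = { a ∈ B : (b+c)·a = b·a + c·a − a for all b,c ∈ B }. Then B0 is a sub-left-brace of B (closed under · , inverses, and subtraction in +), and B0 is a two-sided brace. -/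
/-- The set of elements of a left brace over which multiplication is also
right distributive (in the brace sense). -/
def braceB0 (B : Type*) [LeftBrace B] : Set B :=
  {a : B | ∀ b c : B, (b + c) * a = b * a + c * a - a}

section aux
variable {B : Type*} [LeftBrace B]

lemma LB.lam_add (a b c : B) : a * (b + c) = a * b + a * c - a := by
  rw [eq_sub_iff_add_eq]
  exact LeftBrace.left_compat a b c

lemma LB.mul_zero' (a : B) : a * 0 = a := by
  have h := LB.lam_add a 0 0
  rw [add_zero, eq_sub_iff_add_eq] at h
  exact (add_left_cancel h).symm

lemma LB.one_eq_zero : (1 : B) = 0 := by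
  have h := LB.mul_zero' (1 : B)
  rw [one_mul] at h
  exact h.symm

lemma LB.mul_neg' (a b : B) : a * (-b) = a + a - a * b := by
  have h := LB.lam_add a b (-b)
  rw [add_neg_cancel, LB.mul_zero', eq_sub_iff_add_eq] at h
  rw [h]
  abel

lemma LB.mul_sub' (a b c : B) : a * (b - c) = a * b - a * c + a := by
  have h := LB.lam_add a b (-c)
  rw [LB.mul_neg'] at h
  rw [sub_eq_add_neg, h]
  abel

lemma LB.zero_mul' {a : B} (ha : a ∈ braceB0 B) : (0 : B) * a = a := by
  have h := ha 0 0
  rw [add_zero, eq_sub_iff_add_eq] at h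
  exact (add_left_cancel h).symm

lemma LB.neg_mul' {a : B} (ha : a ∈ braceB0 B) (b : B) :
    (-b) * a = a + a - b * a := by
  have h := ha b (-b)
  rw [add_neg_cancel, LB.zero_mul' ha, eq_sub_iff_add_eq] at h
  rw [h]
  abel

end aux

/-- `B0 = { a ∈ B : (b+c)·a = b·a + c·a − a for all b,c }` is a sub-left-brace
of `B` (contains 1, closed under `·`, inverses and subtraction), and it is a
two-sided brace. -/
theorem stmt13 {B : Type*} [LeftBrace B] :
    (1 : B) ∈ braceB0 B ∧
    (∀ a b : B, a ∈ braceB0 B → b ∈ braceB0 B → a * b ∈ braceB0 B) ∧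
    (∀ a : B, a ∈ braceB0 B → a⁻¹ ∈ braceB0 B) ∧
    (∀ a b : B, a ∈ braceB0 B → b ∈ braceB0 B → a - b ∈ braceB0 B) ∧
    (∀ a b c : B, a ∈ braceB0 B → (b + c) * a + a = b * a + c * a) := by
  refine ⟨?_, ?_, ?_, ?_, ?_⟩
  · intro b c
    rw [mul_one, mul_one, mul_one, LB.one_eq_zero, sub_zero]
  · intro a₁ a₂ ha₁ ha₂ b c
    have h1 : (b + c) * (a₁ * a₂) = ((b + c) * a₁) * a₂ := (mul_assoc _ _ _).symm
    rw [h1, ha₁ b c]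
    have e1 : b * a₁ + c * a₁ - a₁ = b * a₁ + (c * a₁ + (-a₁)) := by abel
    rw [e1, ha₂, ha₂, LB.neg_mul' ha₂, mul_assoc, mul_assoc]
    abel
  · intro a ha b c
    apply mul_right_cancel (b := a)
    have e1 : b * a⁻¹ + c * a⁻¹ - a⁻¹ = b * a⁻¹ + (c * a⁻¹ + (-a⁻¹)) := by abel
    rw [e1, ha, ha, LB.neg_mul' ha, mul_assoc, mul_assoc, mul_assoc,
      inv_mul_cancel, mul_one, mul_one, mul_one, LB.one_eq_zero]
    abel
  · intro a b ha hb x y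
    rw [LB.mul_sub', LB.mul_sub', LB.mul_sub', ha x y, hb x y]
    abel
  · intro a b c ha
    rw [ha b c]
    abel
end

section
/- Let A be a non-trivial finite simple left brace and α ∈ Aut(A,+,·) an automorphism of prime order p that is not an inner automorphism of (A,·). Then the semidirect product brace B = A ⋊ Z/(p) (with componentwise addition and multiplication (a,z)(a',z') = (a·α^z(a'), z+z')) is a prime left brace that is not simple; its only ideals are 0, A×{0}, and B. -/
/-- An ideal of a left brace: an additive subgroup closed under all lambda maps
and normal in the multiplicative group. -/
def IsBraceIdeal {A : Type*} [LeftBrace A] (I : Set A) : Prop :=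
  (0 : A) ∈ I ∧ (∀ x y : A, x ∈ I → y ∈ I → x - y ∈ I) ∧
  (∀ b x : A, x ∈ I → b * x - b ∈ I) ∧ (∀ g x : A, x ∈ I → g * x * g⁻¹ ∈ I)

variable {A : Type*} [LeftBrace A] (p : ℕ) (α : A → A)

/-- Addition on the semidirect product brace `A ⋊ Z/(p)`. -/
def padd (x y : A × ZMod p) : A × ZMod p := (x.1 + y.1, x.2 + y.2)

/-- Multiplication on the semidirect product brace `A ⋊ Z/(p)` via the action
`z ↦ α^z`. -/
def pmul (x y : A × ZMod p) : A × ZMod p := (x.1 * α^[x.2.val] y.1, x.2 + y.2)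

/-- Subtraction on the semidirect product brace `A ⋊ Z/(p)`. -/
def psub (x y : A × ZMod p) : A × ZMod p := (x.1 - y.1, x.2 - y.2)

/-- An ideal of the semidirect product brace `A ⋊ Z/(p)`: an additive subgroup
closed under all lambda maps and normal in the multiplicative group (normality
phrased as: if `y · g = g · x` with `x ∈ I` then `y = g x g⁻¹ ∈ I`). -/
def IsIdealP (I : Set (A × ZMod p)) : Prop :=
  ((0, 0) : A × ZMod p) ∈ I ∧
  (∀ x y : A × ZMod p, x ∈ I → y ∈ I → psub p x y ∈ I) ∧
  (∀ g x : A × ZMod p, x ∈ I → psub p (pmul p α g x) g ∈ I) ∧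
  (∀ g x y : A × ZMod p, x ∈ I → pmul p α y g = pmul p α g x → y ∈ I)

/-- In a left brace, the additive zero equals the multiplicative identity. -/
lemma brace_zero_eq_one' : (0 : A) = 1 := by
  have h := LeftBrace.left_compat (1 : A) 0 0
  rw [add_zero] at h
  have h2 : (1 : A) = 1 * 0 := add_left_cancel h
  rw [one_mul] at h2
  exact h2.symm

/-- Let `A` be a non-trivial finite simple left brace and `α` an automorphism
of the brace `A` of prime order `p` which is not an inner automorphism of
`(A,·)`. Then the semidirect product brace `B = A ⋊ Z/(p)` has exactly the
ideals `0`, `A × {0}` and `B`; in particular it is not simple, but it is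
prime (for nonzero ideals `I`, `J` there are `x ∈ I`, `y ∈ J` with
`x*y := xy − x − y ≠ 0`). -/
theorem stmt14 [Finite A]
    (hA_nontrivial : ∃ a b : A, a * b ≠ a + b)
    (hA_simple : ∀ I : Set A, IsBraceIdeal I → I = {0} ∨ I = Set.univ)
    (hp : p.Prime)
    (hbij : Function.Bijective α)
    (hadd : ∀ x y : A, α (x + y) = α x + α y)
    (hmul : ∀ x y : A, α (x * y) = α x * α y)
    (hordp : α^[p] = id) (hα1 : α ≠ id)
    (hnotinner : ¬ ∃ g : A, ∀ x : A, α x = g * x * g⁻¹) :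
    (∀ I : Set (A × ZMod p), IsIdealP p α I →
      I = {((0 : A), (0 : ZMod p))} ∨ I = {x : A × ZMod p | x.2 = 0} ∨ I = Set.univ) ∧
    IsIdealP p α {x : A × ZMod p | x.2 = 0} ∧
    ({x : A × ZMod p | x.2 = 0} ≠ {((0 : A), (0 : ZMod p))}) ∧
    ({x : A × ZMod p | x.2 = 0} ≠ Set.univ) ∧
    (∀ I J : Set (A × ZMod p), IsIdealP p α I → IsIdealP p α J →
      I ≠ {((0 : A), (0 : ZMod p))} → J ≠ {((0 : A), (0 : ZMod p))} →
      ∃ x ∈ I, ∃ y ∈ J, pmul p α x y ≠ padd p x y) := by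
  haveI : Fact p.Prime := ⟨hp⟩
  haveI : NeZero p := ⟨hp.ne_zero⟩
  haveI : Fact (1 < p) := ⟨hp.one_lt⟩
  have val0 : (0 : ZMod p).val = 0 := ZMod.val_zero
  have val1 : (1 : ZMod p).val = 1 := ZMod.val_one p
  have h01 : (0 : A) = 1 := brace_zero_eq_one'
  obtain ⟨a0, b0, hab0⟩ := hA_nontrivial
  -- A has a nonzero element
  have hAne : ∃ a : A, a ≠ 0 := by
    by_contra h
    push_neg at h
    apply hab0
    rw [h a0, h b0, h01, one_mul, ← h01, add_zero]
  -- the middle set is an ideal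
  have hmid : IsIdealP p α {x : A × ZMod p | x.2 = 0} := by
    refine ⟨rfl, ?_, ?_, ?_⟩
    · intro x y hx hy
      simp only [Set.mem_setOf_eq] at hx hy ⊢
      simp [psub, hx, hy]
    · intro g x hx
      simp only [Set.mem_setOf_eq] at hx ⊢
      simp [psub, pmul, hx]
    · intro g x y hx heq
      simp only [Set.mem_setOf_eq] at hx ⊢
      have h2 := congrArg Prod.snd heq
      simp only [pmul] at h2
      rw [hx, add_zero] at h2
      exact add_eq_right.mp h2
  -- classification of ideals
  have classify : ∀ I : Set (A × ZMod p), IsIdealP p α I →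
      I = {((0 : A), (0 : ZMod p))} ∨ I = {x : A × ZMod p | x.2 = 0} ∨ I = Set.univ := by
    intro I hI
    obtain ⟨h0, hsub, hlam, hconj⟩ := hI
    have hneg : ∀ x ∈ I, ((-x.1, -x.2) : A × ZMod p) ∈ I := by
      intro x hx
      have := hsub _ x h0 hx
      simpa [psub] using this
    have haddm : ∀ x ∈ I, ∀ y ∈ I, ((x.1 + y.1, x.2 + y.2) : A × ZMod p) ∈ I := by
      intro x hx y hy
      have := hsub x _ hx (hneg y hy)
      simpa [psub, sub_neg_eq_add] using this
    have hI0 : IsBraceIdeal {a : A | ((a, 0) : A × ZMod p) ∈ I} := by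
      refine ⟨h0, ?_, ?_, ?_⟩
      · intro x y hx hy
        have := hsub _ _ hx hy
        simpa [psub] using this
      · intro b x hx
        have := hlam (b, 0) (x, 0) hx
        simpa [psub, pmul, val0] using this
      · intro g x hx
        refine hconj (g, 0) (x, 0) (g * x * g⁻¹, 0) hx ?_
        simp [pmul, val0, inv_mul_cancel_right]
    by_cases hz : ∀ x ∈ I, x.2 = (0 : ZMod p)
    · rcases hA_simple _ hI0 with h | h
      · left
        ext x
        simp only [Set.mem_singleton_iff]
        constructor
        · intro hx
          have h2 := hz x hx
          have h1 : x.1 ∈ ({0} : Set A) := by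
            rw [← h]
            show ((x.1, 0) : A × ZMod p) ∈ I
            rw [← h2]
            exact hx
          exact Prod.ext h1 h2
        · intro hx
          rw [hx]; exact h0
      · right; left
        ext x
        simp only [Set.mem_setOf_eq]
        constructor
        · exact hz x
        · intro hx
          have h1 : x.1 ∈ ({a : A | ((a, 0) : A × ZMod p) ∈ I}) := by
            rw [h]; exact Set.mem_univ _
          have h2 : x = (x.1, 0) := Prod.ext rfl hx
          rw [h2]; exact h1
    · push_neg at hz
      obtain ⟨w, hwI, hw2⟩ := hz
      right; right
      have hnsmul : ∀ n : ℕ, ∀ x ∈ I, ((n • x.1, (n : ZMod p) * x.2) : A × ZMod p) ∈ I := by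
        intro n
        induction n with
        | zero => intro x hx; simpa using h0
        | succ n ih =>
          intro x hx
          have := haddm _ (ih x hx) _ hx
          have heq : (((n + 1) • x.1, ((n + 1 : ℕ) : ZMod p) * x.2) : A × ZMod p)
              = (n • x.1 + x.1, (n : ZMod p) * x.2 + x.2) := by
            refine Prod.ext ?_ ?_
            · exact succ_nsmul x.1 n
            · push_cast; ring
          rw [heq]
          exact this
      -- produce an element with second coordinate 1
      obtain ⟨b, hb⟩ : ∃ b : A, ((b, 1) : A × ZMod p) ∈ I := by
        refine ⟨(w.2⁻¹.val) • w.1, ?_⟩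
        have h1 := hnsmul w.2⁻¹.val w hwI
        have h2 : ((w.2⁻¹.val : ZMod p)) * w.2 = 1 := by
          rw [ZMod.natCast_val, ZMod.cast_id]
          exact inv_mul_cancel₀ hw2
        rwa [h2] at h1
      -- α is not conjugation by b⁻¹
      have hg : ∃ g : A, α g ≠ b⁻¹ * g * b := by
        by_contra h
        push_neg at h
        exact hnotinner ⟨b⁻¹, fun x => by rw [h x, inv_inv]⟩
      obtain ⟨g, hg⟩ := hg
      have hyI : ((g * b * (α g)⁻¹, 1) : A × ZMod p) ∈ I := by
        refine hconj (g, 0) (b, 1) _ hb ?_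
        refine Prod.ext ?_ ?_
        · simp [pmul, val0, val1, inv_mul_cancel_right]
        · simp [pmul]
      have hd : ((g * b * (α g)⁻¹ - b, 0) : A × ZMod p) ∈ I := by
        have := hsub _ _ hyI hb
        simpa [psub] using this
      have hdne : g * b * (α g)⁻¹ - b ≠ 0 := by
        intro h
        apply hg
        have h' : g * b * (α g)⁻¹ = b := sub_eq_zero.mp h
        have h2 := congrArg (fun t => t * α g) h'
        simp only [inv_mul_cancel_right] at h2
        -- h2 : g * b = b * α g
        rw [mul_assoc, eq_inv_mul_iff_mul_eq]
        exact h2.symm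
      have hI0univ : {a : A | ((a, 0) : A × ZMod p) ∈ I} = Set.univ := by
        rcases hA_simple _ hI0 with h | h
        · exfalso
          apply hdne
          have : (g * b * (α g)⁻¹ - b) ∈ ({a : A | ((a, 0) : A × ZMod p) ∈ I}) := hd
          rw [h] at this
          exact this
        · exact h
      apply Set.eq_univ_of_forall
      intro x
      have h1 : ((x.2.val • b, x.2) : A × ZMod p) ∈ I := by
        have := hnsmul x.2.val _ hb
        simpa [ZMod.natCast_val, ZMod.cast_id] using this
      have h2 : ((x.1 - x.2.val • b, 0) : A × ZMod p) ∈ I := by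
        have : (x.1 - x.2.val • b) ∈ ({a : A | ((a, 0) : A × ZMod p) ∈ I}) := by
          rw [hI0univ]; exact Set.mem_univ _
        exact this
      have := haddm _ h2 _ h1
      simpa using this
  refine ⟨classify, hmid, ?_, ?_, ?_⟩
  · obtain ⟨a, ha⟩ := hAne
    intro h
    have h1 : ((a, 0) : A × ZMod p) ∈ {x : A × ZMod p | x.2 = 0} := rfl
    rw [h, Set.mem_singleton_iff, Prod.ext_iff] at h1
    exact ha h1.1
  · intro h
    have h1 : ((0, 1) : A × ZMod p) ∈ {x : A × ZMod p | x.2 = 0} := by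
      rw [h]; exact Set.mem_univ _
    exact one_ne_zero h1
  · intro I J hI hJ hIne hJne
    have hIsub : {x : A × ZMod p | x.2 = 0} ⊆ I := by
      rcases classify I hI with h | h | h
      · exact absurd h hIne
      · rw [h]
      · rw [h]; exact Set.subset_univ _
    have hJsub : {x : A × ZMod p | x.2 = 0} ⊆ J := by
      rcases classify J hJ with h | h | h
      · exact absurd h hJne
      · rw [h]
      · rw [h]; exact Set.subset_univ _
    refine ⟨(a0, 0), hIsub rfl, (b0, 0), hJsub rfl, ?_⟩
    simp only [pmul, padd, val0, Function.iterate_zero, id_eq, ne_eq, Prod.mk.injEq, add_zero,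
      not_and]
    intro h _
    exact hab0 h
end

section
/- In the asymmetric product B = T ⋊∘ S of trivial left braces T = T1 × ⋯ × Tn and S = S1 × ⋯ × Sn via a componentwise bilinear map b and an action α where the z-th coordinate of α_{(s1,…,sn)}(t1,…,tn) depends only on s_{z-1} (indices mod n), each subset A_z = {((t1,…,tn),(s1,…,sn)) : t_{z'} = 0 and s_{z'} = 0 for all z' ≠ z} is a left ideal of B whose multiplicative group is abelian, and the additive group of B is the direct sum of the A_z. -/
/-!
Everything is checked coordinatewise. An element of `A_z` vanishes outside coordinate `z`, and
all the structure maps preserve zero coordinates, since `b` and the `f z s` are additive; the only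
coupling between coordinates is that the action on coordinate `z` reads coordinate `z - 1`. For
two elements of `A_z` that coordinate vanishes because `z - 1 ≠ z` (this is where `n > 1`
enters), so they act trivially on each other and their product is the coordinatewise sum.
-/

namespace AsymmetricProduct

variable {ι : Type*} {T S : ι → Type*} [∀ i, AddCommGroup (T i)] [∀ i, AddCommGroup (S i)]

def add (b : ∀ i, T i → T i → S i) (x y : (∀ i, T i) × (∀ i, S i)) :
    (∀ i, T i) × (∀ i, S i) :=
  (fun i => x.1 i + y.1 i, fun i => x.2 i + y.2 i + b i (x.1 i) (y.1 i))

def neg (b : ∀ i, T i → T i → S i) (x : (∀ i, T i) × (∀ i, S i)) : (∀ i, T i) × (∀ i, S i) :=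
  (fun i => -x.1 i, fun i => -x.2 i + b i (x.1 i) (x.1 i))

/-- The multiplication, when coordinate `i` of `α_s` is `f i (s (p i))`. -/
def mul (p : ι → ι) (f : ∀ i, S (p i) → T i → T i) (x y : (∀ i, T i) × (∀ i, S i)) :
    (∀ i, T i) × (∀ i, S i) :=
  (fun i => x.1 i + f i (x.2 (p i)) (y.1 i), fun i => x.2 i + y.2 i)

/-- The brace's `λ_g`, here in the form `λ_g x = g x - g`. -/
def lambda (b : ∀ i, T i → T i → S i) (p : ι → ι) (f : ∀ i, S (p i) → T i → T i)
    (g x : (∀ i, T i) × (∀ i, S i)) : (∀ i, T i) × (∀ i, S i) :=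
  add b (mul p f g x) (neg b g)

def component (i : ι) : Set ((∀ i, T i) × (∀ i, S i)) :=
  {x | ∀ j, j ≠ i → x.1 j = 0 ∧ x.2 j = 0}

def proj [DecidableEq ι] (i : ι) (x : (∀ i, T i) × (∀ i, S i)) : (∀ i, T i) × (∀ i, S i) :=
  (fun j => if j = i then x.1 j else 0, fun j => if j = i then x.2 j else 0)

variable {b : ∀ i, T i → T i → S i} {p : ι → ι} {f : ∀ i, S (p i) → T i → T i} {i : ι}
  {x y : (∀ i, T i) × (∀ i, S i)}

theorem zero_mem_component : (0 : (∀ i, T i) × (∀ i, S i)) ∈ component i :=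
  fun _ _ => ⟨rfl, rfl⟩

section AdditiveRight

variable (hb : ∀ i u v w, b i u (v + w) = b i u v + b i u w)
include hb

theorem pairing_zero_right (j : ι) (u : T j) : b j u 0 = 0 :=
  (AddMonoidHom.mk' (b j u) (hb j u)).map_zero

theorem pairing_neg_right (j : ι) (u v : T j) : b j u (-v) = -b j u v :=
  (AddMonoidHom.mk' (b j u) (hb j u)).map_neg v

theorem add_mem_component (hx : x ∈ component i) (hy : y ∈ component i) :
    add b x y ∈ component i := by
  intro j hj
  obtain ⟨hx₁, hx₂⟩ := hx j hj
  obtain ⟨hy₁, hy₂⟩ := hy j hj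
  simp [add, hx₁, hx₂, hy₁, hy₂, pairing_zero_right hb]

theorem neg_mem_component (hx : x ∈ component i) : neg b x ∈ component i := by
  intro j hj
  obtain ⟨hx₁, hx₂⟩ := hx j hj
  simp [neg, hx₁, hx₂, pairing_zero_right hb]

theorem lambda_mem_component (hf : ∀ i s u v, f i s (u + v) = f i s u + f i s v)
    (g : (∀ i, T i) × (∀ i, S i)) (hx : x ∈ component i) : lambda b p f g x ∈ component i := by
  intro j hj
  obtain ⟨hx₁, hx₂⟩ := hx j hj
  have hf₀ : f j (g.2 (p j)) 0 = 0 := (AddMonoidHom.mk' (f j _) (hf j _)).map_zero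
  refine ⟨by simp [lambda, add, mul, neg, hx₁, hf₀], ?_⟩
  simp only [lambda, add, mul, neg, hx₁, hx₂, hf₀, add_zero, pairing_neg_right hb]
  abel

theorem proj_add [DecidableEq ι] (x y : (∀ i, T i) × (∀ i, S i)) :
    proj i (add b x y) = add b (proj i x) (proj i y) := by
  refine Prod.ext (funext fun j => ?_) (funext fun j => ?_) <;> by_cases hj : j = i
  all_goals simp [proj, add, hj, pairing_zero_right hb]

end AdditiveRight

theorem mul_comm_of_mem_component (hp : p i ≠ i)
    (hf : ∀ i s u v, f i s (u + v) = f i s u + f i s v) (hf_zero : ∀ i, f i 0 = id)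
    (hx : x ∈ component i) (hy : y ∈ component i) : mul p f x y = mul p f y x := by
  refine Prod.ext (funext fun j => ?_) (funext fun j => add_comm _ _)
  by_cases hj : j = i
  · subst hj
    simp [mul, (hx _ hp).2, (hy _ hp).2, hf_zero, add_comm]
  · have hf₀ (s : S (p j)) : f j s 0 = 0 := (AddMonoidHom.mk' (f j s) (hf j s)).map_zero
    simp [mul, (hx j hj).1, (hy j hj).1, hf₀]

theorem proj_mem_component [DecidableEq ι] (x : (∀ i, T i) × (∀ i, S i)) :
    proj i x ∈ component i :=
  fun j hj => by simp [proj, hj]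

theorem proj_injective [DecidableEq ι] :
    Function.Injective fun (x : (∀ i, T i) × (∀ i, S i)) i => proj i x := by
  intro x y h
  refine Prod.ext (funext fun j => ?_) (funext fun j => ?_)
  · simpa [proj] using congrFun (congrArg Prod.fst (congrFun h j)) j
  · simpa [proj] using congrFun (congrArg Prod.snd (congrFun h j)) j

theorem exists_proj_eq [DecidableEq ι] (c : ι → (∀ i, T i) × (∀ i, S i))
    (hc : ∀ i, c i ∈ component i) : ∃ x, ∀ i, proj i x = c i := by
  refine ⟨(fun j => (c j).1 j, fun j => (c j).2 j), fun i => ?_⟩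
  refine Prod.ext (funext fun j => ?_) (funext fun j => ?_) <;> by_cases hj : j = i
  all_goals simp [proj, hj, hc i j]

end AsymmetricProduct

open AsymmetricProduct in
theorem stmt16_general (n : ℕ) (hn : 1 < n)
    (T S : ZMod n → Type) [∀ z, AddCommGroup (T z)] [∀ z, AddCommGroup (S z)]
    (b : ∀ z, T z → T z → S z)
    (hbr : ∀ z u v w, b z u (v + w) = b z u v + b z u w)
    (f : ∀ z : ZMod n, S (z - 1) → T z → T z)
    (hfadd : ∀ z s u v, f z s (u + v) = f z s u + f z s v)
    (hfzero : ∀ z, f z 0 = id) :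
    let B := ((z : ZMod n) → T z) × ((z : ZMod n) → S z)
    let padd : B → B → B := fun x y =>
      (fun z => x.1 z + y.1 z, fun z => x.2 z + y.2 z + b z (x.1 z) (y.1 z))
    let pneg : B → B := fun x =>
      (fun z => -x.1 z, fun z => -x.2 z + b z (x.1 z) (x.1 z))
    let pmul : B → B → B := fun x y =>
      (fun z => x.1 z + f z (x.2 (z - 1)) (y.1 z), fun z => x.2 z + y.2 z)
    let A : ZMod n → Set B := fun z0 =>
      {x : B | ∀ z, z ≠ z0 → x.1 z = 0 ∧ x.2 z = 0}
    let proj : ZMod n → B → B := fun z0 x =>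
      (fun z => if z = z0 then x.1 z else 0, fun z => if z = z0 then x.2 z else 0)
    -- each `A z0` is a left ideal
    (∀ z0, ((fun _ => 0, fun _ => 0) : B) ∈ A z0) ∧
    (∀ z0, ∀ x ∈ A z0, ∀ y ∈ A z0, padd x y ∈ A z0) ∧
    (∀ z0, ∀ x ∈ A z0, pneg x ∈ A z0) ∧
    (∀ z0 (g : B), ∀ x ∈ A z0, padd (pmul g x) (pneg g) ∈ A z0) ∧
    -- with abelian multiplicative group
    (∀ z0, ∀ x ∈ A z0, ∀ y ∈ A z0, pmul x y = pmul y x) ∧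
    -- the additive group of `B` is the direct sum of the `A z0`
    (∀ z0 x, proj z0 x ∈ A z0) ∧
    (∀ z0 x y, proj z0 (padd x y) = padd (proj z0 x) (proj z0 y)) ∧
    Function.Injective (fun (x : B) (z0 : ZMod n) => proj z0 x) ∧
    (∀ c : ZMod n → B, (∀ z0, c z0 ∈ A z0) → ∃ x : B, ∀ z0, proj z0 x = c z0) := by
  intro B padd pneg pmul A proj
  have : Fact (1 < n) := ⟨hn⟩
  have hp (z : ZMod n) : z - 1 ≠ z := sub_eq_self.not.mpr one_ne_zero
  exact ⟨fun _ => zero_mem_component, fun _ _ hx _ hy => add_mem_component hbr hx hy,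
    fun _ _ hx => neg_mem_component hbr hx, fun _ g _ hx => lambda_mem_component hbr hfadd g hx,
    fun z _ hx _ hy => mul_comm_of_mem_component (hp z) hfadd hfzero hx hy,
    fun _ => proj_mem_component, fun _ => proj_add hbr, proj_injective, exists_proj_eq⟩

/-- In the asymmetric product `B = T ⋊∘ S` of trivial left braces
`T = T₁ × ⋯ × Tₙ`, `S = S₁ × ⋯ × Sₙ` via a componentwise bilinear map `b` and
an action `α` whose `z`-th coordinate depends only on `s_{z-1}` (indices mod
`n`), each subset `A_z` of elements supported in coordinate `z` is a left
ideal with abelian multiplicative group, and the additive group of `B` is the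
direct sum of the `A_z`. -/
theorem stmt16 (n : ℕ) (hn : 1 < n)
    (T S : ZMod n → Type) [∀ z, AddCommGroup (T z)] [∀ z, AddCommGroup (S z)]
    (b : ∀ z, T z → T z → S z)
    (hbl : ∀ z u v w, b z (u + v) w = b z u w + b z v w)
    (hbr : ∀ z u v w, b z u (v + w) = b z u v + b z u w)
    (hbs : ∀ z u v, b z u v = b z v u)
    (f : ∀ z : ZMod n, S (z - 1) → T z → T z)
    (hfadd : ∀ z s u v, f z s (u + v) = f z s u + f z s v)
    (hfhom : ∀ z s s', f z (s + s') = f z s ∘ f z s')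
    (hfzero : ∀ z, f z 0 = id)
    (hfbij : ∀ z s, Function.Bijective (f z s))
    (hforth : ∀ z s u v, b z (f z s u) (f z s v) = b z u v) :
    let B := ((z : ZMod n) → T z) × ((z : ZMod n) → S z)
    let padd : B → B → B := fun x y =>
      (fun z => x.1 z + y.1 z, fun z => x.2 z + y.2 z + b z (x.1 z) (y.1 z))
    let pneg : B → B := fun x =>
      (fun z => -x.1 z, fun z => -x.2 z + b z (x.1 z) (x.1 z))
    let pmul : B → B → B := fun x y =>
      (fun z => x.1 z + f z (x.2 (z - 1)) (y.1 z), fun z => x.2 z + y.2 z)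
    let A : ZMod n → Set B := fun z0 =>
      {x : B | ∀ z, z ≠ z0 → x.1 z = 0 ∧ x.2 z = 0}
    let proj : ZMod n → B → B := fun z0 x =>
      (fun z => if z = z0 then x.1 z else 0, fun z => if z = z0 then x.2 z else 0)
    -- each `A z0` is a left ideal
    (∀ z0, ((fun _ => 0, fun _ => 0) : B) ∈ A z0) ∧
    (∀ z0, ∀ x ∈ A z0, ∀ y ∈ A z0, padd x y ∈ A z0) ∧
    (∀ z0, ∀ x ∈ A z0, pneg x ∈ A z0) ∧
    (∀ z0 (g : B), ∀ x ∈ A z0, padd (pmul g x) (pneg g) ∈ A z0) ∧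
    -- with abelian multiplicative group
    (∀ z0, ∀ x ∈ A z0, ∀ y ∈ A z0, pmul x y = pmul y x) ∧
    -- the additive group of `B` is the direct sum of the `A z0`
    (∀ z0 x, proj z0 x ∈ A z0) ∧
    (∀ z0 x y, proj z0 (padd x y) = padd (proj z0 x) (proj z0 y)) ∧
    Function.Injective (fun (x : B) (z0 : ZMod n) => proj z0 x) ∧
    (∀ c : ZMod n → B, (∀ z0, c z0 ∈ A z0) → ∃ x : B, ∀ z0, proj z0 x = c z0) :=
  stmt16_general n hn T S b hbr f hfadd hfzero
end

section
/- With notation as in the main construction (T_z = V_z^{m_z}, S_z = (Z/(p_z))^{r_z}, bilinear maps b'_z and action maps f^{(z-1,z)} built from f_z ∈ O(V_z,b_z) of order p_{z-1}): if for some z the map f_z − id is not bijective on V_z, then J = {((t_1,…,t_n),(s_1,…,s_n)) ∈ T ⋊∘ S : every V_z-component of t_z lies in Im(f_z − id)} is a proper nonzero ideal, so t T ⋊∘ S is not a simple left brace. -/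
section
variable {V : Type*} [AddCommGroup V] (f : V → V)

lemma aux_zero (hf : ∀ u v, f (u + v) = f u + f v) : f 0 = 0 := by
  have h := hf 0 0
  rw [add_zero] at h
  have : f 0 + 0 = f 0 + f 0 := by rw [add_zero]; exact h
  exact (add_left_cancel this).symm

lemma aux_sub (hf : ∀ u v, f (u + v) = f u + f v) (u v : V) : f (u - v) = f u - f v := by
  have h := hf (u - v) v
  rw [sub_add_cancel] at h
  exact eq_sub_of_add_eq h.symm

lemma aux_iter_map (hf : ∀ u v, f (u + v) = f u + f v) (k : ℕ) (v : V) : f^[k] (f v - v) = f (f^[k] v) - f^[k] v := by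
  induction k with
  | zero => simp
  | succ k ih =>
    rw [Function.iterate_succ_apply', ih, aux_sub f hf, Function.iterate_succ_apply']

lemma aux_iter_sub (hf : ∀ u v, f (u + v) = f u + f v) (k : ℕ) (a : V) : ∃ w, f w - w = f^[k] a - a := by
  induction k with
  | zero => exact ⟨0, by simp [aux_zero f hf]⟩
  | succ k ih =>
    obtain ⟨w, hw⟩ := ih
    refine ⟨w + f^[k] a, ?_⟩
    have e : f (w + f^[k] a) - (w + f^[k] a) = (f w - w) + (f (f^[k] a) - f^[k] a) := by
      rw [hf]; abel
    rw [e, hw, Function.iterate_succ_apply']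
    abel

lemma aux4 (hf : ∀ u v, f (u + v) = f u + f v) (k : ℕ) (g X : V) (hX : ∃ v, X = f v - v) :
    ∃ v, g + f^[k] X + -g = f v - v := by
  obtain ⟨v, rfl⟩ := hX
  exact ⟨f^[k] v, by rw [aux_iter_map f hf]; abel⟩

lemma aux5 (hf : ∀ u v, f (u + v) = f u + f v) (k1 k2 : ℕ) (a X y : V) (hX : ∃ v, X = f v - v)
    (h : y + f^[k1] a = a + f^[k2] X) : ∃ v, y = f v - v := by
  obtain ⟨v, rfl⟩ := hX
  obtain ⟨w1, hw1⟩ := aux_iter_sub f hf k1 a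
  refine ⟨f^[k2] v - w1, ?_⟩
  rw [aux_sub f hf, eq_sub_of_add_eq h, aux_iter_map f hf]
  have h3 : f^[k1] a = f w1 - w1 + a := by rw [hw1]; abel
  rw [h3]
  abel
end

/-- With notation as in the main construction (`T_z = V_z^{m_z}`,
`S_z = (Z/(p_z))^{r_z}`, bilinear maps `b'_z` and action maps `f^{(z-1,z)}`
built from `f_z ∈ O(V_z,b_z)` of order `p_{z-1}`): if for some `z` the map
`f_z − id` is not bijective, then `J = { ((t_z),(s_z)) : every V_z-component
of t_z lies in Im(f_z − id) }` is a proper nonzero ideal of the asymmetric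
product `T ⋊∘ S`, so `T ⋊∘ S` is not a simple left brace. -/
theorem stmt17 (n : ℕ) (hn : 1 < n)
    (p : ZMod n → ℕ) (hp : ∀ z, (p z).Prime) (hpinj : Function.Injective p)
    (V : ZMod n → Type) [∀ z, AddCommGroup (V z)] [∀ z, Module (ZMod (p z)) (V z)]
    [∀ z, Finite (V z)]
    (b : ∀ z, V z → V z → ZMod (p z))
    (hbl : ∀ z u v w, b z (u + v) w = b z u w + b z v w)
    (hbr : ∀ z u v w, b z u (v + w) = b z u v + b z u w)
    (hbs : ∀ z u v, b z u v = b z v u)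
    (hbnd : ∀ z (v : V z), (∀ u, b z u v = 0) → v = 0)
    (f : ∀ z, V z → V z)
    (hfadd : ∀ z u v, f z (u + v) = f z u + f z v)
    (hfbij : ∀ z, Function.Bijective (f z))
    (hforth : ∀ z u v, b z (f z u) (f z v) = b z u v)
    (hford : ∀ z, (f z)^[p (z - 1)] = id)
    (hfne : ∀ z, f z ≠ id)
    (r m : ZMod n → ℕ) (hr : ∀ z, 1 ≤ r z)
    (hm : ∀ z, r z ≤ m z) (hm' : ∀ z, r (z - 1) ≤ m z)
    (hnotbij : ∃ z0, ¬ Function.Bijective (fun v : V z0 => f z0 v - v)) :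
    let T : ZMod n → Type := fun z => Fin (m z) → V z
    let S : ZMod n → Type := fun z => Fin (r z) → ZMod (p z)
    -- the bilinear maps b'_z
    let b' : ∀ z, T z → T z → S z := fun z u v i =>
      if (i : ℕ) + 1 < r z then b z (u (Fin.castLE (hm z) i)) (v (Fin.castLE (hm z) i))
      else ∑ j, b z (u j) (v j)
    -- the action maps f^{(z-1,z)}
    let fS : ∀ z, S (z - 1) → T z → T z := fun z s u j =>
      (f z)^[(if h : (j : ℕ) + 1 < r (z - 1)
          then s ⟨j, by omega⟩ + s ⟨r (z - 1) - 1, by omega⟩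
          else s ⟨r (z - 1) - 1, Nat.sub_lt (hr (z - 1)) Nat.one_pos⟩).val] (u j)
    -- the asymmetric product T ⋊∘ S
    let B := ((z : ZMod n) → T z) × ((z : ZMod n) → S z)
    let pzero : B := (fun _ => 0, fun _ => 0)
    let padd : B → B → B := fun x y =>
      (fun z => x.1 z + y.1 z, fun z => x.2 z + y.2 z + b' z (x.1 z) (y.1 z))
    let pneg : B → B := fun x =>
      (fun z => -x.1 z, fun z => -x.2 z + b' z (x.1 z) (x.1 z))
    let pmul : B → B → B := fun x y =>
      (fun z => x.1 z + fS z (x.2 (z - 1)) (y.1 z), fun z => x.2 z + y.2 z)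
    let J : Set B := {x : B | ∀ z j, ∃ v : V z, x.1 z j = f z v - v}
    -- J is an ideal: an additive subgroup, closed under the lambda maps, and
    -- normal in the multiplicative group
    (pzero ∈ J) ∧
    (∀ x ∈ J, ∀ y ∈ J, padd x y ∈ J) ∧
    (∀ x ∈ J, pneg x ∈ J) ∧
    (∀ g : B, ∀ x ∈ J, padd (pmul g x) (pneg g) ∈ J) ∧
    (∀ g x y : B, x ∈ J → pmul y g = pmul g x → y ∈ J) ∧
    -- J is nonzero and proper, so T ⋊∘ S is not simple
    J ≠ {pzero} ∧ J ≠ Set.univ := by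
  intro T S b' fS B pzero padd pneg pmul J
  have hmpos : ∀ z, 0 < m z := fun z => Nat.lt_of_lt_of_le (hr z) (hm z)
  refine ⟨?_, ?_, ?_, ?_, ?_, ?_, ?_⟩
  · intro z j
    refine ⟨0, ?_⟩
    show (0 : V z) = f z 0 - 0
    rw [aux_zero (f z) (hfadd z), sub_zero]
  · intro x hx y hy z j
    obtain ⟨v, hv⟩ := hx z j
    obtain ⟨w, hw⟩ := hy z j
    refine ⟨v + w, ?_⟩
    show x.1 z j + y.1 z j = f z (v + w) - (v + w)
    rw [hv, hw, hfadd z]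
    abel
  · intro x hx z j
    obtain ⟨v, hv⟩ := hx z j
    have hneg : f z (-v) = -(f z v) := by
      have h := aux_sub (f z) (hfadd z) 0 v
      rwa [zero_sub, aux_zero (f z) (hfadd z), zero_sub] at h
    refine ⟨-v, ?_⟩
    show -(x.1 z j) = f z (-v) - (-v)
    rw [hv, hneg]
    abel
  · intro g x hx z j
    exact aux4 (f z) (hfadd z) _ _ _ (hx z j)
  · intro g x y hx heq z j
    have h2 : y.1 z j + fS z (y.2 (z - 1)) (g.1 z) j
        = g.1 z j + fS z (g.2 (z - 1)) (x.1 z) j :=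
      congrFun (congrFun (congrArg Prod.fst heq) z) j
    exact aux5 (f z) (hfadd z) _ _ _ _ _ (hx z j) h2
  · have hu : ∀ z, ∃ u : V z, f z u ≠ u := by
      intro z
      have h := hfne z
      rw [Function.ne_iff] at h
      simpa using h
    choose u hu' using hu
    intro hJ
    have hxJ : (⟨fun z _ => f z (u z) - u z, fun _ => 0⟩ : B) ∈ J :=
      fun z j => ⟨u z, rfl⟩
    rw [hJ, Set.mem_singleton_iff] at hxJ
    have h0 := congrFun (congrFun (congrArg Prod.fst hxJ) 0) ⟨0, hmpos 0⟩
    exact sub_ne_zero.mpr (hu' 0) h0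
  · obtain ⟨z0, hnb⟩ := hnotbij
    have hns : ¬ Function.Surjective (fun v : V z0 => f z0 v - v) := by
      intro hs
      exact hnb ((Finite.surjective_iff_bijective).mp hs)
    rw [Function.Surjective] at hns
    push_neg at hns
    obtain ⟨w, hw⟩ := hns
    intro hJ
    have hxJ : (⟨Function.update (fun z => (fun _ : Fin (m z) => (0 : V z))) z0
        (fun _ => w), fun _ => 0⟩ : B) ∈ J := by rw [hJ]; trivial
    obtain ⟨v, hv⟩ := hxJ z0 ⟨0, hmpos z0⟩
    have hv2 : (Function.update (fun z => (fun _ : Fin (m z) => (0 : V z))) z0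
        (fun _ => w)) z0 ⟨0, hmpos z0⟩ = f z0 v - v := hv
    simp only [Function.update_self] at hv2
    exact hw v hv2.symm
end
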